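/- Let S be an inverse semigroup with zero and let L(S) be its groupoid of proper filters. For nonzero a, let U_a denote the set of proper filters containing a. Then U_a U_b = U_{ab}, where the product of sets of filters uses the groupoid composition A·B = (AB)↑ defined when d(A) = r(B). -/

import Mathlib

/-- An inverse semigroup: every element has a unique (generalized) inverse. -/
class InverseSemigroup (S : Type*) extends Semigroup S, Inv S where
  mul_inv_mul : ∀ s : S, s * s⁻¹ * s = s
  inv_mul_inv : ∀ s : S, s⁻¹ * s * s⁻¹ = s⁻¹
  inv_unique : ∀ s t : S, s * t * s = s → t * s * t = t → t = s⁻¹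

/-- An inverse semigroup with a zero element. -/
class InverseSemigroupWithZero (S : Type*) extends InverseSemigroup S, Zero S where
  zero_mul : ∀ s : S, 0 * s = 0
  mul_zero : ∀ s : S, s * 0 = 0

section Defs
variable {S : Type*}

/-- The natural partial order on an inverse semigroup: `a ≤ b` iff `a = b (a⁻¹ a)`. -/
def nle [InverseSemigroup S] (a b : S) : Prop := a = b * (a⁻¹ * a)

/-- Compatibility: `a⁻¹ b` and `a b⁻¹` are both idempotent. -/
def compat [InverseSemigroup S] (a b : S) : Prop :=
  IsIdempotentElem (a⁻¹ * b) ∧ IsIdempotentElem (a * b⁻¹)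

/-- Orthogonality: `a⁻¹ b = 0 = a b⁻¹`. -/
def orth [InverseSemigroupWithZero S] (a b : S) : Prop := a⁻¹ * b = 0 ∧ a * b⁻¹ = 0

/-- `u` is the least upper bound (join) of `a` and `b` in the natural partial order. -/
def isJoin [InverseSemigroup S] (u a b : S) : Prop :=
  nle a u ∧ nle b u ∧ ∀ c, nle a c → nle b c → nle u c

/-- `m` is the greatest lower bound (meet) of `a` and `b` in the natural partial order. -/
def isMeet [InverseSemigroup S] (m a b : S) : Prop :=
  nle m a ∧ nle m b ∧ ∀ c, nle c a → nle c b → nle c m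

/-- `c = a ∖ b`: `c ≤ a`, `c ⊥ b` and `a = b ∨ c`. -/
def isDiff [InverseSemigroupWithZero S] (c a b : S) : Prop :=
  nle c a ∧ orth c b ∧ isJoin a b c

end Defs

/-- A distributive inverse semigroup: compatible pairs have joins, and
multiplication distributes over such joins. -/
class DistributiveInverseSemigroup (S : Type*) extends InverseSemigroupWithZero S where
  join_exists : ∀ a b : S, compat a b → ∃ u, isJoin u a b
  mul_join_left : ∀ a b u c : S, isJoin u a b → isJoin (c * u) (c * a) (c * b)
  mul_join_right : ∀ a b u c : S, isJoin u a b → isJoin (u * c) (a * c) (b * c)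

/-- A Boolean inverse semigroup: a distributive inverse semigroup whose idempotents
form a (generalized) Boolean algebra, i.e. relative complements of idempotents exist. -/
class BooleanInverseSemigroup (S : Type*) extends DistributiveInverseSemigroup S where
  relcomp : ∀ e f : S, IsIdempotentElem e → IsIdempotentElem f → nle f e →
    ∃ c, IsIdempotentElem c ∧ isDiff c e f

section Stmt11
variable {S : Type*} [InverseSemigroupWithZero S]

/-- Upward closure of a subset. -/
def upcl (X : Set S) : Set S := {s : S | ∃ x ∈ X, nle x s}

/-- Pointwise product of subsets. -/
def smul (X Y : Set S) : Set S := {z : S | ∃ x ∈ X, ∃ y ∈ Y, z = x * y}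

/-- Pointwise inverse of a subset. -/
def sinv (X : Set S) : Set S := {s : S | s⁻¹ ∈ X}

/-- A proper filter of `S`: nonempty, omits `0`, upward closed, downward directed. -/
def IsProperFilter (F : Set S) : Prop :=
  F.Nonempty ∧ (0 : S) ∉ F ∧ (∀ a ∈ F, ∀ b : S, nle a b → b ∈ F) ∧
    ∀ a ∈ F, ∀ b ∈ F, ∃ c ∈ F, nle c a ∧ nle c b

/-- `d(A) = (A⁻¹A)↑`. -/
def dF (A : Set S) : Set S := upcl (smul (sinv A) A)

/-- `r(A) = (AA⁻¹)↑`. -/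
def rF (A : Set S) : Set S := upcl (smul A (sinv A))

/-- `U_a`: the set of proper filters containing `a`. -/
def UU (a : S) : Set (Set S) := {A : Set S | IsProperFilter A ∧ a ∈ A}

end Stmt11

/-!
If `xy = 0` with `x ∈ A`, `y ∈ B` and `d(A) = r(B)`, then `x⁻¹x ∈ r(B)` lies above `zz⁻¹` for
some `z ≤ y` in `B`, so `z = x⁻¹xz ≤ x⁻¹(xy) = 0`; hence `(AB)↑` is a proper filter, and it
contains `ab`. Conversely, every `c ≤ ab` factors as `c = (cb⁻¹)(b c⁻¹c)`, so a proper filter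
`C ∋ ab` is the product of `A = {cb⁻¹ : c ∈ C}↑ ∋ a` and `B = {b c⁻¹c : c ∈ C}↑ ∋ b`, and by
directedness of `C` both `d(A)` and `r(B)` equal `{b c⁻¹c b⁻¹ : c ∈ C}↑`.
-/

namespace InverseSemigroup

section Algebra

variable {S : Type*} [InverseSemigroup S] {e f : S}

protected theorem inv_inv (s : S) : s⁻¹⁻¹ = s :=
  (inv_unique s⁻¹ s (inv_mul_inv s) (mul_inv_mul s)).symm

theorem inv_eq_self_of_isIdempotentElem (he : IsIdempotentElem e) : e⁻¹ = e :=
  (inv_unique e e (by rw [he, he]) (by rw [he, he])).symm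

theorem isIdempotentElem_mul_inv (a : S) : IsIdempotentElem (a * a⁻¹) := by
  rw [IsIdempotentElem, mul_assoc, ← mul_assoc a⁻¹, inv_mul_inv]

theorem isIdempotentElem_inv_mul (a : S) : IsIdempotentElem (a⁻¹ * a) := by
  rw [IsIdempotentElem, mul_assoc, ← mul_assoc a, mul_inv_mul]

theorem mul_inv_mul_mul (s t : S) : s * (s⁻¹ * (s * t)) = s * t := by
  rw [← mul_assoc, ← mul_assoc, mul_inv_mul]

theorem inv_mul_mul_inv_mul (s t : S) : s⁻¹ * (s * (s⁻¹ * t)) = s⁻¹ * t := by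
  rw [← mul_assoc, ← mul_assoc, inv_mul_inv]

/-- `x = (ef)⁻¹` is also an inverse of `ef` in the form `f x e`, which makes `x` idempotent;
an idempotent is its own inverse, so `ef = x⁻¹ = x`. -/
theorem isIdempotentElem_mul (he : IsIdempotentElem e) (hf : IsIdempotentElem f) :
    IsIdempotentElem (e * f) := by
  set x := (e * f)⁻¹ with hx
  have hxef : x * (e * (f * x)) = x := by
    simpa only [mul_assoc] using inv_mul_inv (e * f)
  have hxefe : x * (e * (f * (x * e))) = x * e := by
    simpa only [mul_assoc] using congrArg (· * e) hxef
  have hfxe : f * x * e = x := by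
    refine inv_unique (e * f) (f * x * e) ?_ ?_
    · have h := mul_inv_mul (e * f)
      simp only [mul_assoc] at h ⊢
      rwa [← mul_assoc f f, hf, ← mul_assoc e e, he]
    · simp only [mul_assoc]
      rw [← mul_assoc e e, he, ← mul_assoc f f, hf, hxefe]
  have hx_idem : IsIdempotentElem x :=
    calc x * x = f * x * e * (f * x * e) := by rw [hfxe]
      _ = f * (x * (e * (f * (x * e)))) := by simp only [mul_assoc]
      _ = x := by rw [hxefe, ← mul_assoc, hfxe]
  rwa [← InverseSemigroup.inv_inv (e * f), inv_eq_self_of_isIdempotentElem hx_idem]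

/-- `fe` is an inverse of the idempotent `ef`, which is its own inverse. -/
theorem mul_comm_of_isIdempotentElem (he : IsIdempotentElem e) (hf : IsIdempotentElem f) :
    e * f = f * e := by
  have hef := isIdempotentElem_mul he hf
  have hfe := isIdempotentElem_mul hf he
  have h := inv_unique (e * f) (f * e)
    (by simpa only [mul_assoc, he.mul_self_mul, hf.mul_self_mul] using hef.eq)
    (by simpa only [mul_assoc, he.mul_self_mul, hf.mul_self_mul] using hfe.eq)
  rw [h, inv_eq_self_of_isIdempotentElem hef]

protected theorem mul_inv_rev (a b : S) : (a * b)⁻¹ = b⁻¹ * a⁻¹ := by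
  have hcomm := mul_comm_of_isIdempotentElem (isIdempotentElem_mul_inv b)
    (isIdempotentElem_inv_mul a)
  refine (inv_unique (a * b) (b⁻¹ * a⁻¹) ?_ ?_).symm
  · calc a * b * (b⁻¹ * a⁻¹) * (a * b) = a * ((b * b⁻¹) * (a⁻¹ * a)) * b := by
          simp only [mul_assoc]
      _ = (a * a⁻¹ * a) * (b * b⁻¹ * b) := by rw [hcomm]; simp only [mul_assoc]
      _ = a * b := by rw [mul_inv_mul, mul_inv_mul]
  · calc b⁻¹ * a⁻¹ * (a * b) * (b⁻¹ * a⁻¹) = b⁻¹ * ((a⁻¹ * a) * (b * b⁻¹)) * a⁻¹ := by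
          simp only [mul_assoc]
      _ = (b⁻¹ * b * b⁻¹) * (a⁻¹ * a * a⁻¹) := by rw [← hcomm]; simp only [mul_assoc]
      _ = b⁻¹ * a⁻¹ := by rw [inv_mul_inv, inv_mul_inv]

theorem isIdempotentElem_inv_mul_mul (he : IsIdempotentElem e) (d : S) :
    IsIdempotentElem (d⁻¹ * (e * d)) := by
  have hcomm := mul_comm_of_isIdempotentElem he (isIdempotentElem_mul_inv d)
  calc d⁻¹ * (e * d) * (d⁻¹ * (e * d)) = d⁻¹ * (e * (d * d⁻¹) * (e * d)) := by
        simp only [mul_assoc]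
    _ = (d⁻¹ * d * d⁻¹) * ((e * e) * d) := by rw [hcomm]; simp only [mul_assoc]
    _ = d⁻¹ * (e * d) := by rw [inv_mul_inv, he]

theorem mul_eq_mul_inv_mul_mul (he : IsIdempotentElem e) (d : S) :
    e * d = d * (d⁻¹ * (e * d)) := by
  have hcomm := mul_comm_of_isIdempotentElem he (isIdempotentElem_mul_inv d)
  calc e * d = e * (d * d⁻¹) * d := by rw [mul_assoc, mul_inv_mul]
    _ = d * (d⁻¹ * (e * d)) := by rw [hcomm]; simp only [mul_assoc]

end Algebra

section NaturalOrder

variable {S : Type*} [InverseSemigroup S] {a b c d e f : S}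

theorem nle_refl (a : S) : nle a a := by
  rw [nle, ← mul_assoc, mul_inv_mul]

theorem nle_of_eq_mul_idempotent (hf : IsIdempotentElem f) (h : a = b * f) : nle a b := by
  have hcomm := mul_comm_of_isIdempotentElem hf (isIdempotentElem_inv_mul b)
  have ha_inv : a⁻¹ = f * b⁻¹ := by
    rw [h, InverseSemigroup.mul_inv_rev, inv_eq_self_of_isIdempotentElem hf]
  calc a = b * f := h
    _ = b * ((b⁻¹ * b) * f * f) := by rw [hf.mul_mul_self, ← mul_assoc, ← mul_assoc, mul_inv_mul]
    _ = b * (f * (b⁻¹ * b) * f) := by rw [hcomm]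
    _ = b * (a⁻¹ * a) := by rw [ha_inv, h]; simp only [mul_assoc]

theorem nle_of_eq_idempotent_mul (he : IsIdempotentElem e) (h : a = e * b) : nle a b := by
  have hcomm := mul_comm_of_isIdempotentElem (isIdempotentElem_mul_inv b) he
  have ha_inv : a⁻¹ = b⁻¹ * e := by
    rw [h, InverseSemigroup.mul_inv_rev, inv_eq_self_of_isIdempotentElem he]
  calc a = e * b := h
    _ = e * (b * b⁻¹) * b := by rw [mul_assoc, mul_inv_mul]
    _ = b * b⁻¹ * (e * e) * b := by rw [← hcomm, he]
    _ = b * (a⁻¹ * a) := by rw [ha_inv, h]; simp only [mul_assoc]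

theorem nle_inv (h : nle a b) : nle a⁻¹ b⁻¹ := by
  refine nle_of_eq_idempotent_mul (isIdempotentElem_inv_mul a) ?_
  conv_lhs => rw [h]
  rw [InverseSemigroup.mul_inv_rev, inv_eq_self_of_isIdempotentElem (isIdempotentElem_inv_mul a)]

theorem inv_nle_of_nle_inv (h : nle a b⁻¹) : nle a⁻¹ b := by
  simpa only [InverseSemigroup.inv_inv] using nle_inv h

theorem nle_trans (hab : nle a b) (hbc : nle b c) : nle a c := by
  refine nle_of_eq_mul_idempotent
    (isIdempotentElem_mul (isIdempotentElem_inv_mul b) (isIdempotentElem_inv_mul a)) ?_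
  conv_lhs => rw [hab, hbc]
  simp only [mul_assoc]

theorem eq_mul_inv_mul_of_nle (h : nle a b) : a = a * a⁻¹ * b := by
  have h' := nle_inv h
  rw [nle, InverseSemigroup.inv_inv] at h'
  simpa only [InverseSemigroup.mul_inv_rev, InverseSemigroup.inv_inv,
    inv_eq_self_of_isIdempotentElem (isIdempotentElem_mul_inv a)] using congrArg (·⁻¹) h'

theorem nle_mul (hab : nle a b) (hcd : nle c d) : nle (a * c) (b * d) := by
  have hg := isIdempotentElem_mul (isIdempotentElem_inv_mul a) (isIdempotentElem_mul_inv c)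
  refine nle_of_eq_mul_idempotent (isIdempotentElem_inv_mul_mul hg d) ?_
  calc a * c = b * (a⁻¹ * a) * (c * c⁻¹ * d) := by rw [← hab, ← eq_mul_inv_mul_of_nle hcd]
    _ = b * ((a⁻¹ * a) * (c * c⁻¹) * d) := by simp only [mul_assoc]
    _ = b * d * (d⁻¹ * ((a⁻¹ * a) * (c * c⁻¹) * d)) := by
      rw [mul_assoc b d, ← mul_eq_mul_inv_mul_mul hg d]

theorem eq_mul_of_mul_inv_nle (h : nle (d * d⁻¹) e) : d = e * d := by
  have h' : d * d⁻¹ = e * (d * d⁻¹) := by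
    rwa [nle, inv_eq_self_of_isIdempotentElem (isIdempotentElem_mul_inv d),
      isIdempotentElem_mul_inv d] at h
  calc d = d * d⁻¹ * d := (mul_inv_mul d).symm
    _ = e * (d * d⁻¹) * d := by rw [← h']
    _ = e * d := by rw [mul_assoc e, mul_inv_mul]

theorem mul_inv_mul_mul_eq_of_nle_mul (h : nle c (a * b)) :
    c * b⁻¹ * (b * (c⁻¹ * c)) = c := by
  have hcomm := mul_comm_of_isIdempotentElem (isIdempotentElem_inv_mul c)
    (isIdempotentElem_inv_mul b)
  have hcb : c * (b⁻¹ * b) = c :=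
    calc c * (b⁻¹ * b) = a * (b * (b⁻¹ * (b * (c⁻¹ * c)))) := by
          conv_lhs => rw [h]
          rw [mul_assoc, hcomm]; simp only [mul_assoc]
      _ = c := by rw [mul_inv_mul_mul, ← mul_assoc, ← h]
  calc c * b⁻¹ * (b * (c⁻¹ * c)) = c * (b⁻¹ * b) * (c⁻¹ * c) := by simp only [mul_assoc]
    _ = c := by rw [hcb, ← mul_assoc, mul_inv_mul]

end NaturalOrder

end InverseSemigroup

open InverseSemigroup

section Filters

variable {S : Type*} [InverseSemigroupWithZero S] {x y : S} {C G X Y : Set S}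

theorem eq_zero_of_nle_zero (h : nle x 0) : x = 0 := by
  rwa [nle, InverseSemigroupWithZero.zero_mul] at h

theorem mem_sinv : x ∈ sinv X ↔ x⁻¹ ∈ X := Iff.rfl

theorem subset_upcl (X : Set S) : X ⊆ upcl X := fun x hx ↦ ⟨x, hx, nle_refl x⟩

theorem upcl_subset_upcl (h : ∀ x ∈ X, ∃ y ∈ Y, nle y x) : upcl X ⊆ upcl Y := by
  rintro z ⟨x, hx, hxz⟩
  obtain ⟨y, hy, hyx⟩ := h x hx
  exact ⟨y, hy, nle_trans hyx hxz⟩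

namespace IsProperFilter

theorem zero_not_mem (hC : IsProperFilter C) : (0 : S) ∉ C := hC.2.1

theorem mem_of_nle (hC : IsProperFilter C) (hx : x ∈ C) (h : nle x y) : y ∈ C :=
  hC.2.2.1 x hx y h

theorem directedOn (hC : IsProperFilter C) : DirectedOn (flip nle) C := hC.2.2.2

theorem exists_nle₃ (hC : IsProperFilter C) {p q r : S} (hp : p ∈ C) (hq : q ∈ C)
    (hr : r ∈ C) : ∃ z ∈ C, nle z p ∧ nle z q ∧ nle z r := by
  obtain ⟨w, hw, hwp, hwq⟩ := hC.directedOn p hp q hq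
  obtain ⟨z, hz, hzw, hzr⟩ := hC.directedOn w hw r hr
  exact ⟨z, hz, nle_trans hzw hwp, nle_trans hzw hwq, hzr⟩

end IsProperFilter

theorem isProperFilter_upcl (hne : G.Nonempty) (h0 : (0 : S) ∉ G)
    (hG : DirectedOn (flip nle) G) : IsProperFilter (upcl G) := by
  refine ⟨hne.mono (subset_upcl G), fun ⟨x, hx, hx0⟩ ↦ h0 (eq_zero_of_nle_zero hx0 ▸ hx), ?_, ?_⟩
  · rintro x ⟨g, hg, hgx⟩ y hxy
    exact ⟨g, hg, nle_trans hgx hxy⟩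
  · rintro x ⟨g, hg, hgx⟩ y ⟨g', hg', hg'y⟩
    obtain ⟨z, hz, hzg, hzg'⟩ := hG g hg g' hg'
    exact ⟨z, subset_upcl G hz, nle_trans hzg hgx, nle_trans hzg' hg'y⟩

theorem directedOn_smul (hX : DirectedOn (flip nle) X) (hY : DirectedOn (flip nle) Y) :
    DirectedOn (flip nle) (smul X Y) := by
  rintro _ ⟨x, hx, y, hy, rfl⟩ _ ⟨x', hx', y', hy', rfl⟩
  obtain ⟨u, hu, hux, hux'⟩ := hX x hx x' hx'
  obtain ⟨v, hv, hvy, hvy'⟩ := hY y hy y' hy'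
  exact ⟨u * v, ⟨u, hu, v, hv, rfl⟩, nle_mul hux hvy, nle_mul hux' hvy'⟩

theorem dF_upcl (hG : DirectedOn (flip nle) G) :
    dF (upcl G) = upcl ((fun g ↦ g⁻¹ * g) '' G) := by
  refine (upcl_subset_upcl ?_).antisymm (upcl_subset_upcl ?_)
  · rintro _ ⟨s, ⟨g, hg, hgs⟩, t, ⟨g', hg', hg't⟩, rfl⟩
    obtain ⟨z, hz, hzg, hzg'⟩ := hG g hg g' hg'
    exact ⟨z⁻¹ * z, ⟨z, hz, rfl⟩,
      nle_trans (nle_mul (nle_inv hzg) hzg') (nle_mul (inv_nle_of_nle_inv hgs) hg't)⟩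
  · rintro _ ⟨g, hg, rfl⟩
    refine ⟨g⁻¹ * g, ⟨g⁻¹, ?_, g, subset_upcl G hg, rfl⟩, nle_refl _⟩
    rw [mem_sinv, InverseSemigroup.inv_inv]
    exact subset_upcl G hg

theorem rF_upcl (hG : DirectedOn (flip nle) G) :
    rF (upcl G) = upcl ((fun g ↦ g * g⁻¹) '' G) := by
  refine (upcl_subset_upcl ?_).antisymm (upcl_subset_upcl ?_)
  · rintro _ ⟨s, ⟨g, hg, hgs⟩, t, ⟨g', hg', hg't⟩, rfl⟩
    obtain ⟨z, hz, hzg, hzg'⟩ := hG g hg g' hg'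
    exact ⟨z * z⁻¹, ⟨z, hz, rfl⟩,
      nle_trans (nle_mul hzg (nle_inv hzg')) (nle_mul hgs (inv_nle_of_nle_inv hg't))⟩
  · rintro _ ⟨g, hg, rfl⟩
    refine ⟨g * g⁻¹, ⟨g, subset_upcl G hg, g⁻¹, ?_, rfl⟩, nle_refl _⟩
    rw [mem_sinv, InverseSemigroup.inv_inv]
    exact subset_upcl G hg

end Filters

section Product

variable {S : Type*} [InverseSemigroupWithZero S] {a b : S} {A B C : Set S}

theorem zero_not_mem_smul (hB : IsProperFilter B) (hd : dF A = rF B) :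
    (0 : S) ∉ smul A B := by
  rintro ⟨x, hx, y, hy, hxy⟩
  have hxx : x⁻¹ * x ∈ rF B :=
    hd ▸ subset_upcl _ ⟨x⁻¹, by rwa [mem_sinv, InverseSemigroup.inv_inv], x, hx, rfl⟩
  obtain ⟨_, ⟨y', hy', s, hs, rfl⟩, hle⟩ := hxx
  obtain ⟨z, hz, hzy, hzy', hzs⟩ := hB.exists_nle₃ hy hy' hs
  have hz_eq : z = x⁻¹ * x * z :=
    eq_mul_of_mul_inv_nle (nle_trans (nle_mul hzy' (inv_nle_of_nle_inv hzs)) hle)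
  have hxz : x * z = 0 := eq_zero_of_nle_zero (hxy ▸ nle_mul (nle_refl x) hzy)
  apply hB.zero_not_mem
  rwa [hz_eq, mul_assoc, hxz, InverseSemigroupWithZero.mul_zero] at hz

theorem upcl_smul_mem_UU (hA : A ∈ UU a) (hB : B ∈ UU b) (hd : dF A = rF B) :
    upcl (smul A B) ∈ UU (a * b) := by
  have hab : a * b ∈ smul A B := ⟨a, hA.2, b, hB.2, rfl⟩
  exact ⟨isProperFilter_upcl ⟨_, hab⟩ (zero_not_mem_smul hB.1 hd)
    (directedOn_smul hA.1.directedOn hB.1.directedOn), subset_upcl _ hab⟩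

def leftFactor (C : Set S) (b : S) : Set S := upcl ((· * b⁻¹) '' C)

def rightFactor (C : Set S) (b : S) : Set S := upcl ((fun c ↦ b * (c⁻¹ * c)) '' C)

theorem directedOn_image_mul_inv (hC : IsProperFilter C) :
    DirectedOn (flip nle) ((· * b⁻¹) '' C) :=
  hC.directedOn.mono_comp fun _ _ h ↦ nle_mul h (nle_refl _)

theorem directedOn_image_mul_inv_mul (hC : IsProperFilter C) :
    DirectedOn (flip nle) ((fun c ↦ b * (c⁻¹ * c)) '' C) :=
  hC.directedOn.mono_comp fun _ _ h ↦ nle_mul (nle_refl b) (nle_mul (nle_inv h) h)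

theorem leftFactor_mem_UU (hC : C ∈ UU (a * b)) : leftFactor C b ∈ UU a := by
  obtain ⟨hC, habC⟩ := hC
  refine ⟨isProperFilter_upcl ⟨_, a * b, habC, rfl⟩ ?_ (directedOn_image_mul_inv hC),
    a * b * b⁻¹, ⟨a * b, habC, rfl⟩,
    nle_of_eq_mul_idempotent (isIdempotentElem_mul_inv b) (mul_assoc a b b⁻¹)⟩
  rintro ⟨c, hc, hc0⟩
  obtain ⟨d, hd, hdc, hdab⟩ := hC.directedOn c hc _ habC
  have hd0 : d * b⁻¹ = 0 := eq_zero_of_nle_zero (hc0 ▸ nle_mul hdc (nle_refl b⁻¹))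
  have : d = 0 := by
    rw [← mul_inv_mul_mul_eq_of_nle_mul hdab, hd0, InverseSemigroupWithZero.zero_mul]
  exact hC.zero_not_mem (this ▸ hd)

theorem rightFactor_mem_UU (hC : C ∈ UU (a * b)) : rightFactor C b ∈ UU b := by
  obtain ⟨hC, habC⟩ := hC
  refine ⟨isProperFilter_upcl ⟨_, a * b, habC, rfl⟩ ?_ (directedOn_image_mul_inv_mul hC),
    b * ((a * b)⁻¹ * (a * b)), ⟨a * b, habC, rfl⟩,
    nle_of_eq_mul_idempotent (isIdempotentElem_inv_mul _) rfl⟩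
  rintro ⟨c, hc, hc0⟩
  obtain ⟨d, hd, hdc, hdab⟩ := hC.directedOn c hc _ habC
  have hd0 : b * (d⁻¹ * d) = 0 :=
    eq_zero_of_nle_zero (hc0 ▸ nle_mul (nle_refl b) (nle_mul (nle_inv hdc) hdc))
  have : d = 0 := by
    rw [← mul_inv_mul_mul_eq_of_nle_mul hdab, hd0, InverseSemigroupWithZero.mul_zero]
  exact hC.zero_not_mem (this ▸ hd)

theorem dF_leftFactor_eq_rF_rightFactor (hC : IsProperFilter C) :
    dF (leftFactor C b) = rF (rightFactor C b) := by
  rw [leftFactor, rightFactor, dF_upcl (directedOn_image_mul_inv hC),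
    rF_upcl (directedOn_image_mul_inv_mul hC), Set.image_image, Set.image_image]
  congr 2
  funext c
  rw [InverseSemigroup.mul_inv_rev, InverseSemigroup.mul_inv_rev, InverseSemigroup.inv_inv,
    inv_eq_self_of_isIdempotentElem (isIdempotentElem_inv_mul c)]
  simp only [mul_assoc, inv_mul_mul_inv_mul]

theorem upcl_smul_leftFactor_rightFactor (hC : C ∈ UU (a * b)) :
    upcl (smul (leftFactor C b) (rightFactor C b)) = C := by
  obtain ⟨hC, habC⟩ := hC
  refine Set.Subset.antisymm ?_ fun x hx ↦ ?_
  · rintro x ⟨_, ⟨u, ⟨_, ⟨c, hc, rfl⟩, hcu⟩, v, ⟨_, ⟨c', hc', rfl⟩, hc'v⟩, rfl⟩, huvx⟩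
    obtain ⟨d, hd, hdc, hdc', hdab⟩ := hC.exists_nle₃ hc hc' habC
    refine hC.mem_of_nle hd (nle_trans ?_ huvx)
    rw [← mul_inv_mul_mul_eq_of_nle_mul hdab]
    exact nle_trans (nle_mul (nle_mul hdc (nle_refl _))
      (nle_mul (nle_refl b) (nle_mul (nle_inv hdc') hdc'))) (nle_mul hcu hc'v)
  · obtain ⟨d, hd, hdx, hdab⟩ := hC.directedOn x hx _ habC
    exact ⟨d, ⟨d * b⁻¹, subset_upcl _ ⟨d, hd, rfl⟩, b * (d⁻¹ * d), subset_upcl _ ⟨d, hd, rfl⟩,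
      (mul_inv_mul_mul_eq_of_nle_mul hdab).symm⟩, hdx⟩

end Product

theorem stmt11_general {S : Type*} [InverseSemigroupWithZero S] (a b : S) :
    {C : Set S | ∃ A ∈ UU a, ∃ B ∈ UU b, dF A = rF B ∧ C = upcl (smul A B)} =
      UU (a * b) := by
  ext C
  constructor
  · rintro ⟨A, hA, B, hB, hd, rfl⟩
    exact upcl_smul_mem_UU hA hB hd
  · intro hC
    exact ⟨_, leftFactor_mem_UU hC, _, rightFactor_mem_UU hC,
      dF_leftFactor_eq_rF_rightFactor hC.1, (upcl_smul_leftFactor_rightFactor hC).symm⟩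

/-- In the groupoid of proper filters (where `A · B = (AB)↑` is defined iff
`d(A) = r(B)`), one has `U_a U_b = U_{ab}` for nonzero `a, b`. -/
theorem stmt11 {S : Type*} [InverseSemigroupWithZero S] (a b : S)
    (ha : a ≠ 0) (hb : b ≠ 0) :
    {C : Set S | ∃ A ∈ UU a, ∃ B ∈ UU b, dF A = rF B ∧ C = upcl (smul A B)} =
      UU (a * b) :=
  stmt11_general a b
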